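/- arXiv:2504.18338 — 3 statements merged into one kernel-verified Lean document; each statement's English description precedes it below -/
import Mathlib

section
/- Let G be a connected graph, T an elimination tree of G, and T₁ the elimination tree obtained from T by one rotation. Then for any two vertices x, y of G, |dist_T(x, y) − dist_{T₁}(x, y)| ≤ 1, where distances are the graph distances in the trees T and T₁ respectively. -/
open Relation Set

/-- An elimination tree of a graph `G`: a rooted tree on the vertex set (given by a parent
function) such that every vertex reaches the root by iterating `parent`, and for every edge
of `G` one endpoint is an ancestor of the other. -/
structure ElimTree (V : Type) (G : SimpleGraph V) where
  parent : V → Option V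
  root : V
  root_parent : parent root = none
  reaches_root : ∀ v : V, Relation.ReflTransGen (fun a b => parent a = some b) v root
  hierarchy : ∀ x y : V, G.Adj x y →
    Relation.ReflTransGen (fun a b => parent a = some b) y x ∨
    Relation.ReflTransGen (fun a b => parent a = some b) x y

namespace ElimTree

variable {V : Type} {G : SimpleGraph V}

/-- `T.Anc x y` means `x` is an ancestor of `y` in `T` (including `x = y`). -/
def Anc (T : ElimTree V G) (x y : V) : Prop :=
  Relation.ReflTransGen (fun a b => T.parent a = some b) y x

/-- The set of children of `v` in `T`. -/
def children (T : ElimTree V G) (v : V) : Set V := {w | T.parent w = some v}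

/-- The vertex set of the subtree of `T` rooted at `v`. -/
def subtree (T : ElimTree V G) (v : V) : Set V := {x | T.Anc v x}

/-- `a b` is an edge of the tree `T`. -/
def IsEdge (T : ElimTree V G) (a b : V) : Prop :=
  T.parent b = some a ∨ T.parent a = some b

/-- The tree `T` viewed as an undirected simple graph. -/
def toGraph (T : ElimTree V G) : SimpleGraph V where
  Adj a b := a ≠ b ∧ T.IsEdge a b
  symm := ⟨fun a b h => ⟨h.1.symm, h.2.symm⟩⟩
  loopless := ⟨fun a h => h.1 rfl⟩

/-- `T'` is obtained from `T` by rotating the edge `uv`, where `u = parent(T, v)`: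
`v` takes `u`'s place, `u` becomes a child of `v`, children of `u` stay children of `u`,
and each child `w` of `v` becomes a child of `u` iff `u` has a `G`-neighbor in the subtree
of `T` rooted at `w`; all other vertices keep their parent. -/
def IsRot (T T' : ElimTree V G) (u v : V) : Prop :=
  T.parent v = some u ∧
  T'.parent u = some v ∧
  T'.parent v = T.parent u ∧
  (∀ w, w ≠ v → T.parent w = some u → T'.parent w = some u) ∧
  (∀ w, T.parent w = some v →
    (((∃ x ∈ T.subtree w, G.Adj u x) → T'.parent w = some u) ∧
     ((¬ ∃ x ∈ T.subtree w, G.Adj u x) → T'.parent w = some v))) ∧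
  (∀ s, s ≠ u → s ≠ v → T.parent s ≠ some u → T.parent s ≠ some v →
    T'.parent s = T.parent s)

/-- `(f, e)` is an `n`-rotation sequence from `T` to `T'`: `f i` are the intermediate
elimination trees and `e i` the rotated edges. -/
def RotSeq (T T' : ElimTree V G) (n : ℕ) (f : ℕ → ElimTree V G) (e : ℕ → V × V) : Prop :=
  f 0 = T ∧ f n = T' ∧ ∀ i < n, IsRot (f i) (f (i + 1)) (e i).1 (e i).2

/-- A vertex `x` is used by the rotation sequence with edges `e` of length `n`. -/
def Uses (n : ℕ) (e : ℕ → V × V) (x : V) : Prop :=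
  ∃ i < n, (e i).1 = x ∨ (e i).2 = x

/-- The rotation distance between two elimination trees. -/
noncomputable def rotDist (T T' : ElimTree V G) : ℕ :=
  sInf {n | ∃ f e, RotSeq T T' n f e}

/-- `v` is `(T, T')`-children-bad. -/
def ChildrenBad (T T' : ElimTree V G) (v : V) : Prop := T.children v ≠ T'.children v

/-- `v` is `(T, T')`-parent-bad. -/
def ParentBad (T T' : ElimTree V G) (v : V) : Prop := T.parent v ≠ T'.parent v

/-- `v` is `(T, T')`-bad. -/
def Bad (T T' : ElimTree V G) (v : V) : Prop := ChildrenBad T T' v ∨ ParentBad T T' v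

/-- The ball of radius `r` around the set `S` in the tree `T`. -/
def ball (T : ElimTree V G) (S : Set V) (r : ℕ) : Set V :=
  {x | ∃ s ∈ S, T.toGraph.dist s x ≤ r}

end ElimTree

section RotationDistance

open SimpleGraph

variable {V : Type} {G : SimpleGraph V}

namespace ElimTree

lemma parent_ne_self (T : ElimTree V G) (a : V) : T.parent a ≠ some a := by
  intro hp
  have key : ∀ c, Relation.ReflTransGen (fun x y => T.parent x = some y) a c → c = a := by
    intro c hc
    induction hc with
    | refl => rfl
    | tail _ hstep ih =>
      subst ih
      rw [hp] at hstep
      exact (Option.some_injective _ hstep).symm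
  have hr := key T.root (T.reaches_root a)
  have hroot := T.root_parent
  rw [hr, hp] at hroot
  exact absurd hroot (by simp)

lemma no_two_cycle (T : ElimTree V G) {a b : V} (h1 : T.parent a = some b)
    (h2 : T.parent b = some a) : False := by
  have key : ∀ c, Relation.ReflTransGen (fun x y => T.parent x = some y) a c → c = a ∨ c = b := by
    intro c hc
    induction hc with
    | refl => exact Or.inl rfl
    | tail _ hstep ih =>
      rcases ih with rfl | rfl
      · rw [h1] at hstep
        exact Or.inr (Option.some_injective _ hstep).symm
      · rw [h2] at hstep
        exact Or.inl (Option.some_injective _ hstep).symm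
  have hroot := T.root_parent
  rcases key T.root (T.reaches_root a) with hr | hr
  · rw [hr, h1] at hroot; exact absurd hroot (by simp)
  · rw [hr, h2] at hroot; exact absurd hroot (by simp)

lemma reachable_of_steps (T : ElimTree V G) {a b : V}
    (h : Relation.ReflTransGen (fun x y => T.parent x = some y) a b) :
    T.toGraph.Reachable a b := by
  induction h with
  | refl => exact SimpleGraph.Reachable.refl _
  | tail _ hstep ih =>
    refine ih.trans (SimpleGraph.Adj.reachable ?_)
    refine ⟨?_, Or.inr hstep⟩
    rintro rfl
    exact T.parent_ne_self _ hstep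

lemma toGraph_reachable (T : ElimTree V G) (x y : V) : T.toGraph.Reachable x y :=
  (T.reachable_of_steps (T.reaches_root x)).trans
    (T.reachable_of_steps (T.reaches_root y)).symm

end ElimTree

variable [DecidableEq V]

/-- The map collapsing `v` onto `u`. -/
def rotRF (u v a : V) : V := if a = v then u else a

lemma rotRF_v {u v : V} : rotRF u v v = u := if_pos rfl

lemma rotRF_u {u v : V} : rotRF u v u = u := by unfold rotRF; split <;> rfl

lemma rotRF_eq_of_ne {u v a c : V} (h : rotRF u v a = c) (hc : c ≠ u) : a = c := by
  unfold rotRF at h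
  split at h
  · exact absurd h.symm hc
  · exact h

lemma rotRF_eq_u {u v a : V} (h : rotRF u v a = u) : a = u ∨ a = v := by
  unfold rotRF at h
  split at h
  · right; assumption
  · left; exact h

lemma rotRF_ne_v {u v a : V} (hne : u ≠ v) : rotRF u v a ≠ v := by
  unfold rotRF
  split
  · exact hne
  · assumption

lemma rotRF_eq_self {u v a : V} (h : rotRF u v a ≠ u) : rotRF u v a = a := by
  unfold rotRF at h ⊢
  split at h <;> simp_all

/-- The contraction of the tree `T` along the edge `uv`. -/
def rotH (T : ElimTree V G) (u v : V) : SimpleGraph V where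
  Adj a b := a ≠ b ∧ ∃ a' b', T.IsEdge a' b' ∧ rotRF u v a' = a ∧ rotRF u v b' = b
  symm := by
    refine ⟨?_⟩
    rintro a b ⟨hne, a', b', he, ha, hb⟩
    exact ⟨hne.symm, b', a', Or.symm he, hb, ha⟩
  loopless := ⟨fun a ha => ha.1 rfl⟩

lemma walk_to_rotH {T T' : ElimTree V G} {u v : V}
    (hyp : ∀ a b, T'.toGraph.Adj a b →
      rotRF u v a = rotRF u v b ∨ (rotH T u v).Adj (rotRF u v a) (rotRF u v b)) :
    ∀ {x y : V} (w : T'.toGraph.Walk x y),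
      ∃ q : (rotH T u v).Walk (rotRF u v x) (rotRF u v y), q.length ≤ w.length := by
  intro x y w
  induction w with
  | nil => exact ⟨SimpleGraph.Walk.nil, le_rfl⟩
  | cons hadj w' ih =>
    obtain ⟨q, hq⟩ := ih
    rcases hyp _ _ hadj with heq | hH
    · rw [heq]
      exact ⟨q, hq.trans (by simp)⟩
    · exact ⟨SimpleGraph.Walk.cons hH q, by simpa using Nat.succ_le_succ hq⟩

lemma hom_T (T : ElimTree V G) (u v : V) : ∀ a b, T.toGraph.Adj a b →
    rotRF u v a = rotRF u v b ∨ (rotH T u v).Adj (rotRF u v a) (rotRF u v b) := by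
  intro a b hab
  by_cases heq : rotRF u v a = rotRF u v b
  · exact Or.inl heq
  · exact Or.inr ⟨heq, a, b, hab.2, rfl, rfl⟩


variable {T T₁ : ElimTree V G} {u v : V}

lemma rot_wit_aux (hrot : ElimTree.IsRot T T₁ u v) {a b : V} (hba : T₁.parent b = some a) :
    ∃ a' b', T.IsEdge a' b' ∧ rotRF u v a' = rotRF u v a ∧ rotRF u v b' = rotRF u v b := by
  obtain ⟨r1, r2, r3, r4, r5, r6⟩ := hrot
  by_cases hbv : b = v
  · rw [hbv, r3] at hba
    exact ⟨a, u, Or.inl hba, rfl, by rw [hbv, rotRF_u, rotRF_v]⟩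
  by_cases hbu : b = u
  · rw [hbu, r2] at hba
    obtain rfl : v = a := Option.some_injective _ hba
    exact ⟨u, v, Or.inl r1, by rw [rotRF_u, rotRF_v],
      by rw [hbu, rotRF_u, rotRF_v]⟩
  cases hpb : T.parent b with
  | none =>
    have h6 := r6 b hbu hbv (by rw [hpb]; simp) (by rw [hpb]; simp)
    rw [hba, hpb] at h6
    exact absurd h6 (by simp)
  | some t =>
    by_cases htu : t = u
    · rw [htu] at hpb
      have h4 := r4 b hbv hpb
      rw [hba] at h4
      have ha : a = u := Option.some_injective _ h4
      exact ⟨u, b, Or.inl hpb, by rw [ha], rfl⟩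
    by_cases htv : t = v
    · rw [htv] at hpb
      have h5 := r5 b hpb
      have hd : T₁.parent b = some u ∨ T₁.parent b = some v := by
        by_cases hex : ∃ x ∈ T.subtree b, G.Adj u x
        · exact Or.inl (h5.1 hex)
        · exact Or.inr (h5.2 hex)
      refine ⟨v, b, Or.inl hpb, ?_, rfl⟩
      rcases hd with h' | h' <;> rw [hba] at h'
      · have ha : a = u := Option.some_injective _ h'
        rw [ha, rotRF_u, rotRF_v]
      · have ha : a = v := Option.some_injective _ h'
        rw [ha]
    · have h6 := r6 b hbu hbv
        (by rw [hpb]; intro hh; exact htu (Option.some_injective _ hh))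
        (by rw [hpb]; intro hh; exact htv (Option.some_injective _ hh))
      rw [hba, hpb] at h6
      obtain rfl : a = t := Option.some_injective _ h6
      exact ⟨a, b, Or.inl hpb, rfl, rfl⟩

lemma rot_wit (hrot : ElimTree.IsRot T T₁ u v) {a b : V} (he : T₁.IsEdge a b) :
    ∃ a' b', T.IsEdge a' b' ∧ rotRF u v a' = rotRF u v a ∧ rotRF u v b' = rotRF u v b := by
  rcases he with hba | hab
  · exact rot_wit_aux hrot hba
  · obtain ⟨a', b', he', h1, h2⟩ := rot_wit_aux hrot hab
    exact ⟨b', a', Or.symm he', h2, h1⟩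

lemma hom_T₁ (hrot : ElimTree.IsRot T T₁ u v) : ∀ a b, T₁.toGraph.Adj a b →
    rotRF u v a = rotRF u v b ∨ (rotH T u v).Adj (rotRF u v a) (rotRF u v b) := by
  intro a b hab
  by_cases heq : rotRF u v a = rotRF u v b
  · exact Or.inl heq
  · obtain ⟨a', b', he, h1, h2⟩ := rot_wit hrot hab.2
    exact Or.inr ⟨heq, a', b', he, h1, h2⟩

lemma rot_lift_aux (hrot : ElimTree.IsRot T T₁ u v) {a b : V} (hba : T.parent b = some a) :
    rotRF u v a = rotRF u v b ∨
      ∃ a' b', T₁.IsEdge a' b' ∧ rotRF u v a' = rotRF u v a ∧ rotRF u v b' = rotRF u v b := by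
  obtain ⟨r1, r2, r3, r4, r5, r6⟩ := hrot
  by_cases hbv : b = v
  · rw [hbv, r1] at hba
    have ha : a = u := (Option.some_injective _ hba).symm
    left; rw [ha, hbv, rotRF_u, rotRF_v]
  by_cases hbu : b = u
  · rw [hbu] at hba
    right
    exact ⟨a, v, Or.inl (by rw [r3, hba]), rfl, by rw [hbu, rotRF_u, rotRF_v]⟩
  by_cases hau : a = u
  · rw [hau] at hba
    right
    exact ⟨u, b, Or.inl (r4 b hbv hba), by rw [hau], rfl⟩
  by_cases hav : a = v
  · rw [hav] at hba
    have h5 := r5 b hba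
    right
    by_cases hex : ∃ x ∈ T.subtree b, G.Adj u x
    · exact ⟨u, b, Or.inl (h5.1 hex), by rw [hav, rotRF_u, rotRF_v], rfl⟩
    · exact ⟨v, b, Or.inl (h5.2 hex), by rw [hav], rfl⟩
  · right
    refine ⟨a, b, Or.inl (r6 b hbu hbv ?_ ?_ ▸ hba), rfl, rfl⟩
    · rw [hba]; intro hh; exact hau (Option.some_injective _ hh)
    · rw [hba]; intro hh; exact hav (Option.some_injective _ hh)

lemma rot_lift_edge (hrot : ElimTree.IsRot T T₁ u v) : ∀ a b, (rotH T u v).Adj a b →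
    ∃ a' b', T₁.IsEdge a' b' ∧ rotRF u v a' = a ∧ rotRF u v b' = b := by
  rintro a b ⟨hab, a₀, b₀, he, ha0, hb0⟩
  rcases he with hh | hh
  · rcases rot_lift_aux hrot hh with heq | ⟨a', b', he', h1, h2⟩
    · rw [ha0, hb0] at heq; exact absurd heq hab
    · exact ⟨a', b', he', by rw [h1, ha0], by rw [h2, hb0]⟩
  · rcases rot_lift_aux hrot hh with heq | ⟨a', b', he', h1, h2⟩
    · rw [ha0, hb0] at heq; exact absurd heq.symm hab
    · exact ⟨b', a', Or.symm he', by rw [h2, ha0], by rw [h1, hb0]⟩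

lemma rotH_lift_T : ∀ a b, (rotH T u v).Adj a b →
    ∃ a' b', T.IsEdge a' b' ∧ rotRF u v a' = a ∧ rotRF u v b' = b := fun _ _ h => h.2

lemma lift_walk_free {T' : ElimTree V G} (hne : u ≠ v)
    (HE : ∀ a b, (rotH T u v).Adj a b →
      ∃ a' b', T'.IsEdge a' b' ∧ rotRF u v a' = a ∧ rotRF u v b' = b) :
    ∀ {a b : V} (q : (rotH T u v).Walk a b), u ∉ q.support →
      ∃ w : T'.toGraph.Walk a b, w.length ≤ q.length := by
  intro a b q
  induction q with
  | nil => exact fun _ => ⟨SimpleGraph.Walk.nil, le_rfl⟩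
  | @cons a c b hac q' ih =>
    intro hu
    rw [SimpleGraph.Walk.support_cons] at hu
    have hau : a ≠ u := fun hh => hu (by simp [hh])
    have hu' : u ∉ q'.support := fun hh => hu (by simp [hh])
    have hcu : c ≠ u := fun hh => hu' (hh ▸ q'.start_mem_support)
    obtain ⟨a', c', he, ha', hc'⟩ := HE _ _ hac
    obtain rfl : a' = a := rotRF_eq_of_ne ha' hau
    obtain rfl : c' = c := rotRF_eq_of_ne hc' hcu
    obtain ⟨w', hw'⟩ := ih hu'
    exact ⟨SimpleGraph.Walk.cons (show T'.toGraph.Adj a' c' from ⟨hac.ne, he⟩) w', by simp only [SimpleGraph.Walk.length_cons]; omega⟩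

lemma lift_walk_top {T' : ElimTree V G} (hne : u ≠ v) (huv : T'.toGraph.Adj u v)
    (HE : ∀ a b, (rotH T u v).Adj a b →
      ∃ a' b', T'.IsEdge a' b' ∧ rotRF u v a' = a ∧ rotRF u v b' = b) :
    ∀ {a : V} (q : (rotH T u v).Walk u a), q.IsPath → ∀ y, rotRF u v y = a →
      ∃ s, (s = u ∨ s = v) ∧ ∃ w : T'.toGraph.Walk s y, w.length ≤ q.length := by
  intro a q hq y hy
  cases q with
  | nil =>
    rcases rotRF_eq_u hy with h | h
    · exact ⟨y, Or.inl h, SimpleGraph.Walk.nil, by simp⟩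
    · exact ⟨y, Or.inr h, SimpleGraph.Walk.nil, by simp⟩
  | @cons _ c _ hac q' =>
    rw [SimpleGraph.Walk.cons_isPath_iff] at hq
    obtain ⟨hq', hu'⟩ := hq
    have hcu : c ≠ u := Ne.symm hac.1
    have hau : a ≠ u := fun hh => hu' (hh ▸ q'.end_mem_support)
    have hya : y = a := rotRF_eq_of_ne hy hau
    obtain ⟨a', c', he, ha', hc'⟩ := HE _ _ hac
    have hcv : c ≠ v := by rw [← hc']; exact rotRF_ne_v hne
    obtain rfl : c = c' := (rotRF_eq_of_ne hc' hcu).symm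
    have ha'uv : a' = u ∨ a' = v := rotRF_eq_u ha'
    have hadj : T'.toGraph.Adj a' c := by
      refine ⟨?_, he⟩
      rcases ha'uv with h | h <;> rw [h]
      · exact Ne.symm hcu
      · exact Ne.symm hcv
    obtain ⟨w', hw'⟩ := lift_walk_free hne HE q' hu'
    exact ⟨a', ha'uv, (SimpleGraph.Walk.cons hadj w').copy rfl hya.symm,
      by simp only [SimpleGraph.Walk.length_copy, SimpleGraph.Walk.length_cons,
            SimpleGraph.Walk.length_cons]; omega⟩

lemma lift_walk {T' : ElimTree V G} (hne : u ≠ v) (huv : T'.toGraph.Adj u v)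
    (HE : ∀ a b, (rotH T u v).Adj a b →
      ∃ a' b', T'.IsEdge a' b' ∧ rotRF u v a' = a ∧ rotRF u v b' = b)
    (x y : V) (q : (rotH T u v).Walk (rotRF u v x) (rotRF u v y)) (hq : q.IsPath) :
    ∃ w : T'.toGraph.Walk x y, w.length ≤ q.length + 1 := by
  by_cases hu : u ∈ q.support
  · have hq₁ : (q.takeUntil u hu).reverse.IsPath := (hq.takeUntil hu).reverse
    have hq₂ : (q.dropUntil u hu).IsPath := hq.dropUntil hu
    have hlen : (q.takeUntil u hu).length + (q.dropUntil u hu).length = q.length := by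
      rw [← SimpleGraph.Walk.length_append, SimpleGraph.Walk.take_spec]
    obtain ⟨s₁, hs₁, w₁, hw₁⟩ := lift_walk_top hne huv HE (q.takeUntil u hu).reverse hq₁ x rfl
    obtain ⟨s₂, hs₂, w₂, hw₂⟩ := lift_walk_top hne huv HE (q.dropUntil u hu) hq₂ y rfl
    rw [SimpleGraph.Walk.length_reverse] at hw₁
    have hmid : ∃ m : T'.toGraph.Walk s₁ s₂, m.length ≤ 1 := by
      rcases hs₁ with rfl | rfl <;> rcases hs₂ with rfl | rfl
      · exact ⟨SimpleGraph.Walk.nil, by simp⟩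
      · exact ⟨SimpleGraph.Walk.cons huv SimpleGraph.Walk.nil, by simp⟩
      · exact ⟨SimpleGraph.Walk.cons huv.symm SimpleGraph.Walk.nil, by simp⟩
      · exact ⟨SimpleGraph.Walk.nil, by simp⟩
    obtain ⟨m, hm⟩ := hmid
    refine ⟨(w₁.reverse.append m).append w₂, ?_⟩
    simp only [SimpleGraph.Walk.length_append, SimpleGraph.Walk.length_reverse]
    omega
  · have hx : rotRF u v x ≠ u := fun hh =>
      hu ((congrArg (fun z => z ∈ q.support) hh).mp q.start_mem_support)
    have hy : rotRF u v y ≠ u := fun hh =>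
      hu ((congrArg (fun z => z ∈ q.support) hh).mp q.end_mem_support)
    obtain ⟨w, hw⟩ := lift_walk_free hne HE q hu
    exact ⟨w.copy (rotRF_eq_self hx) (rotRF_eq_self hy),
      by rw [SimpleGraph.Walk.length_copy]; omega⟩

end RotationDistance

/-- a single rotation changes tree distances by at most one. -/
theorem rot_dist_change_le_one {V : Type} [Fintype V] [DecidableEq V] {G : SimpleGraph V}
    (hG : G.Connected) (T T₁ : ElimTree V G) (u v : V)
    (h : ElimTree.IsRot T T₁ u v) (x y : V) :
    |(T.toGraph.dist x y : ℤ) - (T₁.toGraph.dist x y : ℤ)| ≤ 1 := by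
  have hne : u ≠ v := by
    rintro rfl
    exact T.parent_ne_self u h.1
  have huvT : T.toGraph.Adj u v := ⟨hne, Or.inl h.1⟩
  have huvT₁ : T₁.toGraph.Adj u v := ⟨hne, Or.inr h.2.1⟩
  -- lower bounds via the homomorphism to the contracted graph
  obtain ⟨pT, hpT⟩ := (T.toGraph_reachable x y).exists_walk_length_eq_dist
  obtain ⟨qT, hqT⟩ := walk_to_rotH (hom_T T u v) pT
  have hreach : (rotH T u v).Reachable (rotRF u v x) (rotRF u v y) := ⟨qT⟩
  have hDT : (rotH T u v).dist (rotRF u v x) (rotRF u v y) ≤ T.toGraph.dist x y :=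
    le_trans (SimpleGraph.dist_le qT) (hpT ▸ hqT)
  obtain ⟨pT₁, hpT₁⟩ := (T₁.toGraph_reachable x y).exists_walk_length_eq_dist
  obtain ⟨qT₁, hqT₁⟩ := walk_to_rotH (hom_T₁ h) pT₁
  have hDT₁ : (rotH T u v).dist (rotRF u v x) (rotRF u v y) ≤ T₁.toGraph.dist x y :=
    le_trans (SimpleGraph.dist_le qT₁) (hpT₁ ▸ hqT₁)
  -- upper bounds via lifting a shortest path of the contracted graph
  obtain ⟨qH, hqHp, hqH⟩ := hreach.exists_path_of_dist
  obtain ⟨wT, hwT⟩ := lift_walk hne huvT (rotH_lift_T) x y qH hqHp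
  have hTD : T.toGraph.dist x y ≤ (rotH T u v).dist (rotRF u v x) (rotRF u v y) + 1 :=
    le_trans (SimpleGraph.dist_le wT) (by omega)
  obtain ⟨wT₁, hwT₁⟩ := lift_walk hne huvT₁ (rot_lift_edge h) x y qH hqHp
  have hTD₁ : T₁.toGraph.dist x y ≤ (rotH T u v).dist (rotRF u v x) (rotRF u v y) + 1 :=
    le_trans (SimpleGraph.dist_le wT₁) (by omega)
  rw [abs_le]
  constructor <;> [skip; skip] <;> push_cast <;> omega
end

section
/- Let G be a connected graph, T and T' elimination trees of G, and σ an ℓ-rotation sequence from T to T' with ℓ ≤ k. Then for every vertex v of T, there are at most k children u of v in T such that σ uses some vertex of the subtree of T rooted at u. In particular, at most k children of v are themselves used by σ. -/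
open Relation Set

namespace ElimTree

variable {V : Type} {G : SimpleGraph V}

lemma det (T : ElimTree V G) {a b c : V} (h1 : T.parent a = some b)
    (h2 : T.parent a = some c) : b = c := by
  rw [h1] at h2; exact Option.some.inj h2

lemma acyclic (T : ElimTree V G) (x : V) :
    ∀ y, T.parent y = some x →
      ¬ Relation.ReflTransGen (fun a b => T.parent a = some b) x y := by
  induction (T.reaches_root x) using Relation.ReflTransGen.head_induction_on with
  | refl =>
    intro y hy hxy
    rcases hxy.cases_head with h | ⟨c, hc, _⟩
    · subst h; rw [T.root_parent] at hy; exact nomatch hy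
    · rw [T.root_parent] at hc; exact nomatch hc
  | head hac hcr ih =>
    rename_i a c
    intro y hy hay
    rcases hay.cases_head with h | ⟨w, haw, hwy⟩
    · rw [← h] at hy
      have h2 : a = c := T.det hy hac
      exact ih a hac (by rw [h2])
    · have h2 : w = c := T.det haw hac
      rw [h2] at hwy
      exact ih a hac (hwy.tail hy)

lemma antisymm (T : ElimTree V G) {x y : V}
    (h1 : Relation.ReflTransGen (fun a b => T.parent a = some b) x y)
    (h2 : Relation.ReflTransGen (fun a b => T.parent a = some b) y x) : x = y := by
  rcases h1.cases_head with h | ⟨w, hxw, hwy⟩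
  · exact h
  · exact absurd (hwy.trans h2) (T.acyclic w x hxw)

lemma comparable (T : ElimTree V G) {z a b : V}
    (h1 : Relation.ReflTransGen (fun a b => T.parent a = some b) z a)
    (h2 : Relation.ReflTransGen (fun a b => T.parent a = some b) z b) :
    Relation.ReflTransGen (fun a b => T.parent a = some b) a b ∨
    Relation.ReflTransGen (fun a b => T.parent a = some b) b a := by
  induction h1 using Relation.ReflTransGen.head_induction_on with
  | refl => exact Or.inl h2
  | head hzc hca ih =>
    rename_i z' c
    rcases h2.cases_head with h | ⟨w, hzw, hwb⟩
    · subst h; exact Or.inr (hca.head hzc)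
    · have := T.det hzw hzc; subst this; exact ih hwb

lemma sibling_disjoint (T : ElimTree V G) {v u1 u2 z : V}
    (h1 : T.parent u1 = some v) (h2 : T.parent u2 = some v) (hne : u1 ≠ u2)
    (hz1 : z ∈ T.subtree u1) (hz2 : z ∈ T.subtree u2) : False := by
  have hcomp := T.comparable hz1 hz2
  have key : ∀ a b : V, T.parent a = some v → T.parent b = some v → a ≠ b →
      Relation.ReflTransGen (fun x y => T.parent x = some y) a b → False := by
    intro a b ha hb hab h
    rcases h.cases_head with h' | ⟨w, haw, hwb⟩
    · exact hab h'
    · have hwv : w = v := T.det haw ha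
      rw [hwv] at hwb
      have hvb : v = b := T.antisymm hwb (Relation.ReflTransGen.single hb)
      rw [hvb] at hb
      exact T.acyclic b b hb Relation.ReflTransGen.refl
  rcases hcomp with h | h
  · exact key u1 u2 h1 h2 hne h
  · exact key u2 u1 h2 h1 hne.symm h

lemma uses_mono {n m : ℕ} {e : ℕ → V × V} {x : V} (h : Uses n e x) (hnm : n ≤ m) :
    Uses m e x := by
  obtain ⟨i, hi, h⟩ := h; exact ⟨i, lt_of_lt_of_le hi hnm, h⟩

lemma edgeInv {T T' : ElimTree V G} {ℓ : ℕ} {f : ℕ → ElimTree V G} {e : ℕ → V × V}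
    (hσ : RotSeq T T' ℓ f e) :
    ∀ i ≤ ℓ, ∀ a b, (f i).IsEdge a b → T.IsEdge a b ∨ Uses i e a ∨ Uses i e b := by
  intro i
  induction i with
  | zero => intro _ a b hab; rw [hσ.1] at hab; exact Or.inl hab
  | succ i ih =>
    intro hi a b hab
    have hil : i < ℓ := lt_of_lt_of_le (Nat.lt_succ_self i) hi
    obtain ⟨h1, h2, h3, h4, h5, h6⟩ := hσ.2.2 i hil
    set p := (e i).1 with hp
    set q := (e i).2 with hq
    have usep : Uses (i+1) e p := ⟨i, Nat.lt_succ_self i, Or.inl rfl⟩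
    have useq : Uses (i+1) e q := ⟨i, Nat.lt_succ_self i, Or.inr rfl⟩
    -- helper for one orientation
    have main : ∀ a b, (f (i+1)).parent b = some a →
        T.IsEdge a b ∨ Uses (i+1) e a ∨ Uses (i+1) e b := by
      intro a b hb
      by_cases hbp : b = p
      · subst hbp
        have : a = q := (f (i+1)).det hb h2
        subst this; exact Or.inr (Or.inl useq)
      by_cases hbq : b = q
      · subst hbq; exact Or.inr (Or.inr useq)
      by_cases hfp : (f i).parent b = some p
      · have := (f (i+1)).det hb (h4 b hbq hfp)
        subst this; exact Or.inr (Or.inl usep)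
      by_cases hfq : (f i).parent b = some q
      · by_cases hex : ∃ x ∈ (f i).subtree b, G.Adj p x
        · have := (f (i+1)).det hb ((h5 b hfq).1 hex)
          subst this; exact Or.inr (Or.inl usep)
        · have := (f (i+1)).det hb ((h5 b hfq).2 hex)
          subst this; exact Or.inr (Or.inl useq)
      · have : (f (i+1)).parent b = (f i).parent b := h6 b hbp hbq hfp hfq
        rw [this] at hb
        rcases ih (le_of_lt hil) a b (Or.inl hb) with h | h | h
        · exact Or.inl h
        · exact Or.inr (Or.inl (uses_mono h (Nat.le_succ i)))
        · exact Or.inr (Or.inr (uses_mono h (Nat.le_succ i)))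
    rcases hab with hb | ha
    · exact main a b hb
    · rcases main b a ha with h | h | h
      · exact Or.inl h.symm
      · exact Or.inr (Or.inr h)
      · exact Or.inr (Or.inl h)

lemma cross (T : ElimTree V G) {v u1 u2 a b : V}
    (h1 : T.parent u1 = some v) (h2 : T.parent u2 = some v) (hne : u1 ≠ u2)
    (ha : a ∈ T.subtree u1) (hb : b ∈ T.subtree u2) : ¬ T.IsEdge a b := by
  rintro (h | h)
  · -- parent b = some a, so b ∈ subtree u1
    exact T.sibling_disjoint h1 h2 hne (Relation.ReflTransGen.head h ha) hb
  · exact T.sibling_disjoint h1 h2 hne ha (Relation.ReflTransGen.head h hb)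

end ElimTree

/-- for an `ℓ`-rotation sequence with `ℓ ≤ k`, at most `k` children of any
vertex `v` root a subtree containing a vertex used by the sequence; in particular at most
`k` children of `v` are themselves used. -/
theorem few_children_subtrees_used {V : Type} [Fintype V] [DecidableEq V]
    {G : SimpleGraph V} (hG : G.Connected) (T T' : ElimTree V G) (k ℓ : ℕ) (hk : ℓ ≤ k)
    (f : ℕ → ElimTree V G) (e : ℕ → V × V) (hσ : ElimTree.RotSeq T T' ℓ f e) (v : V) :
    {u | u ∈ T.children v ∧ ∃ x ∈ T.subtree u, ElimTree.Uses ℓ e x}.ncard ≤ k ∧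
    {u | u ∈ T.children v ∧ ElimTree.Uses ℓ e u}.ncard ≤ k := by
  classical
  set S1 := {u | u ∈ T.children v ∧ ∃ x ∈ T.subtree u, ElimTree.Uses ℓ e x} with hS1
  set S2 := {u | u ∈ T.children v ∧ ElimTree.Uses ℓ e u} with hS2
  have hsub : S2 ⊆ S1 := by
    rintro u ⟨hc, hu⟩
    exact ⟨hc, u, Relation.ReflTransGen.refl, hu⟩
  have key : S1.ncard ≤ ℓ := by
    have hP : ∀ u ∈ S1, ∃ i, i < ℓ ∧
        ((e i).1 ∈ T.subtree u ∨ (e i).2 ∈ T.subtree u) := by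
      rintro u ⟨hc, x, hx, i, hi, hix⟩
      refine ⟨i, hi, ?_⟩
      rcases hix with h | h
      · exact Or.inl (h ▸ hx)
      · exact Or.inr (h ▸ hx)
    set g : V → ℕ := fun u =>
      if h : ∃ i, i < ℓ ∧ ((e i).1 ∈ T.subtree u ∨ (e i).2 ∈ T.subtree u)
      then Nat.find h else 0 with hg
    have hmaps : ∀ u ∈ S1, g u ∈ (↑(Finset.range ℓ) : Set ℕ) := by
      intro u hu
      have h := hP u hu
      simp only [hg, dif_pos h]
      simpa using (Nat.find_spec h).1
    have hinj : Set.InjOn g S1 := by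
      intro u1 hu1 u2 hu2 hgeq
      by_contra hne0
      have hne : u1 ≠ u2 := hne0
      have h1 := hP u1 hu1
      have h2 := hP u2 hu2
      rw [hg] at hgeq
      simp only [dif_pos h1, dif_pos h2] at hgeq
      set i := Nat.find h1 with hi1
      have hi2 : i = Nat.find h2 := hgeq
      have spec1 := Nat.find_spec h1
      have spec2 := Nat.find_spec h2
      rw [← hi1] at spec1
      rw [← hi2] at spec2
      obtain ⟨hil, hin1⟩ := spec1
      obtain ⟨_, hin2⟩ := spec2
      have hc1 : T.parent u1 = some v := hu1.1
      have hc2 : T.parent u2 = some v := hu2.1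
      -- minimality: no earlier index hits subtree u1 or u2
      have hmin1 : ∀ j < i, ¬ ((e j).1 ∈ T.subtree u1 ∨ (e j).2 ∈ T.subtree u1) := by
        intro j hj hcon
        exact Nat.find_min h1 (hi1 ▸ hj) ⟨lt_trans hj hil, hcon⟩
      have hmin2 : ∀ j < i, ¬ ((e j).1 ∈ T.subtree u2 ∨ (e j).2 ∈ T.subtree u2) := by
        intro j hj hcon
        exact Nat.find_min h2 (hi2 ▸ hj) ⟨lt_trans hj hil, hcon⟩
      -- the edge e i is an edge of f i
      have hrot := hσ.2.2 i hil
      have hedge : (f i).IsEdge (e i).1 (e i).2 := Or.inl hrot.1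
      have hdisj1 : ¬ ((e i).1 ∈ T.subtree u1 ∧ (e i).1 ∈ T.subtree u2) := by
        rintro ⟨ha, hb⟩; exact T.sibling_disjoint hc1 hc2 hne ha hb
      have hdisj2 : ¬ ((e i).2 ∈ T.subtree u1 ∧ (e i).2 ∈ T.subtree u2) := by
        rintro ⟨ha, hb⟩; exact T.sibling_disjoint hc1 hc2 hne ha hb
      have husub : ∀ (u x : V), x ∈ T.subtree u → ElimTree.Uses i e x →
          ∃ j, j < i ∧ ((e j).1 ∈ T.subtree u ∨ (e j).2 ∈ T.subtree u) := by
        rintro u x hx ⟨j, hj, hjx⟩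
        refine ⟨j, hj, ?_⟩
        rcases hjx with h | h
        · exact Or.inl (h ▸ hx)
        · exact Or.inr (h ▸ hx)
      rcases ElimTree.edgeInv hσ i (le_of_lt hil) _ _ hedge with hE | hU | hU <;>
        rcases hin1 with hA | hA <;> rcases hin2 with hB | hB
      · exact hdisj1 ⟨hA, hB⟩
      · exact T.cross hc1 hc2 hne hA hB hE
      · exact T.cross hc2 hc1 hne.symm hB hA hE
      · exact hdisj2 ⟨hA, hB⟩
      · exact hdisj1 ⟨hA, hB⟩
      · obtain ⟨j, hj, hor⟩ := husub u1 _ hA hU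
        exact hmin1 j hj hor
      · obtain ⟨j, hj, hor⟩ := husub u2 _ hB hU
        exact hmin2 j hj hor
      · exact hdisj2 ⟨hA, hB⟩
      · exact hdisj1 ⟨hA, hB⟩
      · obtain ⟨j, hj, hor⟩ := husub u2 _ hB hU
        exact hmin2 j hj hor
      · obtain ⟨j, hj, hor⟩ := husub u1 _ hA hU
        exact hmin1 j hj hor
      · exact hdisj2 ⟨hA, hB⟩
    calc S1.ncard ≤ (↑(Finset.range ℓ) : Set ℕ).ncard :=
          Set.ncard_le_ncard_of_injOn g hmaps hinj (Set.toFinite _)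
      _ = ℓ := by rw [Set.ncard_coe_finset]; simp
  exact ⟨le_trans key hk, le_trans (le_trans (Set.ncard_le_ncard hsub (Set.toFinite _)) key) hk⟩
end

section
/- Let G be a connected graph, T an elimination tree of G, uv ∈ E(T) with u = parent(T, v), and T' = rot(T, uv). Then T' is again an elimination tree of G: for every edge xy of G, one of x, y is an ancestor of the other in T'. -/
open Relation Set

section RotAux

variable {V : Type} {G : SimpleGraph V}

lemma ElimTree.no_cycle (T : ElimTree V G) (x : V) :
    ¬ Relation.TransGen (fun a b => T.parent a = some b) x x := by
  have h := T.reaches_root x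
  induction h using Relation.ReflTransGen.head_induction_on with
  | refl =>
      intro hc
      obtain ⟨b, hb, -⟩ := Relation.TransGen.head'_iff.mp hc
      rw [T.root_parent] at hb
      exact Option.some_ne_none _ hb.symm
  | head hab hbr ih =>
      intro hc
      obtain ⟨c, hac, hca⟩ := Relation.TransGen.head'_iff.mp hc
      have hcb : c = _ := Option.some.inj (hac.symm.trans hab)
      subst hcb
      exact ih (Relation.TransGen.tail' hca hab)

lemma ElimTree.anc_antisymm (T : ElimTree V G) {a b : V}
    (h1 : Relation.ReflTransGen (fun a b => T.parent a = some b) a b)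
    (h2 : Relation.ReflTransGen (fun a b => T.parent a = some b) b a) : a = b := by
  rcases Relation.ReflTransGen.cases_head h1 with h | ⟨c, hac, hcb⟩
  · exact h
  · refine absurd (?_ : Relation.TransGen (fun a b => T.parent a = some b) a a) (T.no_cycle a)
    exact Relation.TransGen.head' hac (hcb.trans h2)

open Classical in
/-- The parent function of the rotated tree. -/
noncomputable def ElimTree.rotParent (T : ElimTree V G) (u v : V) : V → Option V :=
  fun s =>
    if s = u then some v
    else if s = v then T.parent u
    else if T.parent s = some v then
      (if ∃ x ∈ T.subtree s, G.Adj u x then some u else some v)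
    else T.parent s

end RotAux

/-- the rotation of any tree edge `uv` (with `u = parent(T, v)`) of an
elimination tree of `G` yields again an elimination tree of `G`. -/
theorem rot_exists {V : Type} [Fintype V] [DecidableEq V] {G : SimpleGraph V}
    (hG : G.Connected) (T : ElimTree V G) (u v : V) (huv : T.parent v = some u) :
    ∃ T' : ElimTree V G, ElimTree.IsRot T T' u v := by
  classical
  set st : V → V → Prop := fun a b => T.parent a = some b with hst
  set Q : V → Option V := T.rotParent u v with hQdef
  set qt : V → V → Prop := fun a b => Q a = some b with hqt
  have hcyc : ∀ x, ¬ Relation.TransGen st x x := T.no_cycle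
  have hanti : ∀ {a b : V}, Relation.ReflTransGen st a b →
      Relation.ReflTransGen st b a → a = b := fun h1 h2 => T.anc_antisymm h1 h2
  have hneuv : u ≠ v := by
    intro h; subst h; exact hcyc u (Relation.TransGen.single huv)
  have hpu_ne_v : T.parent u ≠ some v := by
    intro h
    exact hcyc u (Relation.TransGen.head h (Relation.TransGen.single huv))
  -- computation rules for Q
  have hQu : Q u = some v := by
    simp [hQdef, ElimTree.rotParent]
  have hQv : Q v = T.parent u := by
    simp [hQdef, ElimTree.rotParent, hneuv.symm]
  have hQchild : ∀ w, T.parent w = some v →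
      Q w = (if ∃ x ∈ T.subtree w, G.Adj u x then some u else some v) := by
    intro w hw
    have hwu : w ≠ u := fun h => hpu_ne_v (h ▸ hw)
    have hwv : w ≠ v := by
      intro h; subst h
      exact hneuv (Option.some.inj (huv.symm.trans hw))
    simp [hQdef, ElimTree.rotParent, hwu, hwv, hw]
  have hQother : ∀ s, s ≠ u → s ≠ v → T.parent s ≠ some v → Q s = T.parent s := by
    intro s h1 h2 h3
    simp [hQdef, ElimTree.rotParent, h1, h2, h3]
  -- path lifting when u and v are not on the path
  have hlift : ∀ a b : V, Relation.ReflTransGen st a b →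
      ¬ (Relation.ReflTransGen st a u ∧ Relation.ReflTransGen st u b) →
      ¬ (Relation.ReflTransGen st a v ∧ Relation.ReflTransGen st v b) →
      Relation.ReflTransGen qt a b := by
    intro a b hab
    induction hab using Relation.ReflTransGen.head_induction_on with
    | refl => intro _ _; exact Relation.ReflTransGen.refl
    | @head a c hac hcb ih =>
        intro hu hv
        have hu' : ¬ (Relation.ReflTransGen st c u ∧ Relation.ReflTransGen st u b) :=
          fun ⟨h1, h2⟩ => hu ⟨Relation.ReflTransGen.head hac h1, h2⟩
        have hv' : ¬ (Relation.ReflTransGen st c v ∧ Relation.ReflTransGen st v b) :=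
          fun ⟨h1, h2⟩ => hv ⟨Relation.ReflTransGen.head hac h1, h2⟩
        have hau : a ≠ u := by
          intro h; subst h
          exact hu ⟨Relation.ReflTransGen.refl, Relation.ReflTransGen.head hac hcb⟩
        have hav : a ≠ v := by
          intro h; subst h
          exact hv ⟨Relation.ReflTransGen.refl, Relation.ReflTransGen.head hac hcb⟩
        have hpav : T.parent a ≠ some v := by
          intro h
          have hcv : c = v := Option.some.inj (hac.symm.trans h)
          subst hcv
          exact hv ⟨Relation.ReflTransGen.single hac, hcb⟩
        have hQa : Q a = some c := (hQother a hau hav hpav).trans hac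
        exact Relation.ReflTransGen.head hQa (ih hu' hv')
  -- everything in the subtree of u has v as an ancestor in the new tree
  have hL2 : ∀ y, Relation.ReflTransGen st y u → Relation.ReflTransGen qt y v := by
    intro y hy
    by_cases hyu : y = u
    · replace hyu := hyu.symm; subst hyu; exact Relation.ReflTransGen.single hQu
    by_cases hyv : Relation.ReflTransGen st y v
    · rcases Relation.ReflTransGen.cases_tail hyv with h | ⟨w, hyw, hwv⟩
      · subst h; exact Relation.ReflTransGen.refl
      · have hwu : w ≠ u := fun h => hpu_ne_v (h ▸ hwv)
        have hwvne : w ≠ v := by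
          intro h; subst h
          exact hneuv (Option.some.inj (huv.symm.trans hwv))
        have hwanc : Relation.ReflTransGen st w u :=
          Relation.ReflTransGen.tail (Relation.ReflTransGen.single hwv) huv
        have hliftw : Relation.ReflTransGen qt y w := by
          refine hlift y w hyw ?_ ?_
          · rintro ⟨-, h2⟩; exact hwu (hanti h2 hwanc).symm
          · rintro ⟨-, h2⟩
            exact hwvne (hanti h2 (Relation.ReflTransGen.single hwv)).symm
        by_cases hc : ∃ x ∈ T.subtree w, G.Adj u x
        · exact hliftw.trans (Relation.ReflTransGen.head
            ((hQchild w hwv).trans (if_pos hc)) (Relation.ReflTransGen.single hQu))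
        · exact Relation.ReflTransGen.tail hliftw ((hQchild w hwv).trans (if_neg hc))
    · rcases Relation.ReflTransGen.cases_tail hy with h | ⟨c, hyc, hcu⟩
      · exact absurd h.symm hyu
      · have hcv : c ≠ v := by
          intro h; subst h; exact hyv hyc
        have hcu' : c ≠ u := by
          intro h; subst h; exact hcyc c (Relation.TransGen.single hcu)
        have hliftc : Relation.ReflTransGen qt y c := by
          refine hlift y c hyc ?_ ?_
          · rintro ⟨-, h2⟩
            exact hcu' (hanti (Relation.ReflTransGen.single hcu) h2)
          · rintro ⟨h1, -⟩; exact hyv h1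
        have hQc : Q c = some u := by
          rw [hQother c hcu' hcv (by rw [hcu]; exact fun h => hneuv (Option.some.inj h))]
          exact hcu
        exact (hliftc.tail hQc).tail hQu
  -- key hierarchy transfer
  have hkey : ∀ x y : V, G.Adj x y → Relation.ReflTransGen st y x →
      Relation.ReflTransGen qt y x ∨ Relation.ReflTransGen qt x y := by
    intro x y hadj hanc
    by_cases hxu : x = u
    · replace hxu := hxu.symm; subst hxu
      by_cases hyu : y = u
      · replace hyu := hyu.symm; subst hyu; exact Or.inl Relation.ReflTransGen.refl
      by_cases hyv : Relation.ReflTransGen st y v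
      · by_cases hyveq : y = v
        · replace hyveq := hyveq.symm; subst hyveq
          exact Or.inr (Relation.ReflTransGen.single hQu)
        rcases Relation.ReflTransGen.cases_tail hyv with h | ⟨w, hyw, hwv⟩
        · exact absurd h.symm hyveq
        · left
          have hwu : w ≠ u := fun h => hpu_ne_v (h ▸ hwv)
          have hwvne : w ≠ v := by
            intro h; subst h
            exact hneuv (Option.some.inj (huv.symm.trans hwv))
          have hwanc : Relation.ReflTransGen st w u :=
            Relation.ReflTransGen.tail (Relation.ReflTransGen.single hwv) huv
          have hliftw : Relation.ReflTransGen qt y w := by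
            refine hlift y w hyw ?_ ?_
            · rintro ⟨-, h2⟩; exact hwu (hanti h2 hwanc).symm
            · rintro ⟨-, h2⟩
              exact hwvne (hanti h2 (Relation.ReflTransGen.single hwv)).symm
          have hc : ∃ x ∈ T.subtree w, G.Adj u x := ⟨y, hyw, hadj⟩
          have hQw : Q w = some u := by rw [hQchild w hwv, if_pos hc]
          exact hliftw.tail hQw
      · rcases Relation.ReflTransGen.cases_tail hanc with h | ⟨c, hyc, hcu⟩
        · exact absurd h.symm hyu
        · left
          have hcv : c ≠ v := by
            intro h; subst h; exact hyv hyc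
          have hcu' : c ≠ u := by
            intro h; subst h; exact hcyc c (Relation.TransGen.single hcu)
          have hliftc : Relation.ReflTransGen qt y c := by
            refine hlift y c hyc ?_ ?_
            · rintro ⟨-, h2⟩
              exact hcu' (hanti (Relation.ReflTransGen.single hcu) h2)
            · rintro ⟨h1, -⟩; exact hyv h1
          have hQc : Q c = some u := by
            rw [hQother c hcu' hcv (by rw [hcu]; exact fun h => hneuv (Option.some.inj h))]
            exact hcu
          exact hliftc.tail hQc
    by_cases hxv : x = v
    · replace hxv := hxv.symm; subst hxv
      exact Or.inl (hL2 y (hanc.tail huv))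
    · by_cases huon : Relation.ReflTransGen st y u ∧ Relation.ReflTransGen st u x
      · left
        obtain ⟨h1, h2⟩ := huon
        rcases Relation.ReflTransGen.cases_head h2 with h | ⟨z, huz, hzx⟩
        · exact absurd h.symm hxu
        · have hQvz : Q v = some z := hQv.trans huz
          have hliftz : Relation.ReflTransGen qt z x := by
            refine hlift z x hzx ?_ ?_
            · rintro ⟨hzu, -⟩
              refine absurd (?_ : Relation.TransGen st u u) (hcyc u)
              exact Relation.TransGen.head' huz hzu
            · rintro ⟨hzv, -⟩
              refine absurd (?_ : Relation.TransGen st v v) (hcyc v)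
              exact Relation.TransGen.head' huv (Relation.ReflTransGen.head huz hzv)
          exact (hL2 y h1).trans (Relation.ReflTransGen.head hQvz hliftz)
      · left
        refine hlift y x hanc huon ?_
        rintro ⟨h1, h2⟩
        refine huon ⟨h1.tail huv, ?_⟩
        rcases Relation.ReflTransGen.cases_head h2 with h | ⟨z, hvz, hzx⟩
        · exact absurd h.symm hxv
        · have : z = u := Option.some.inj (hvz.symm.trans huv)
          subst this; exact hzx
  -- the root of the new tree
  set r : V := if u = T.root then v else T.root with hrdef
  -- v reaches the new root
  have hvroot : Relation.ReflTransGen qt v r := by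
    by_cases hur : u = T.root
    · rw [hrdef, if_pos hur]
    · rw [hrdef, if_neg hur]
      have h2 := T.reaches_root u
      rcases Relation.ReflTransGen.cases_head h2 with h | ⟨z, huz, hzr⟩
      · exact absurd h hur
      · have hQvz : Q v = some z := hQv.trans huz
        have hliftz : Relation.ReflTransGen qt z T.root := by
          refine hlift z T.root hzr ?_ ?_
          · rintro ⟨hzu, -⟩
            refine absurd (?_ : Relation.TransGen st u u) (hcyc u)
            exact Relation.TransGen.head' huz hzu
          · rintro ⟨hzv, -⟩
            refine absurd (?_ : Relation.TransGen st v v) (hcyc v)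
            exact Relation.TransGen.head' huv (Relation.ReflTransGen.head huz hzv)
        exact Relation.ReflTransGen.head hQvz hliftz
  have huroot : Relation.ReflTransGen qt u r := Relation.ReflTransGen.head hQu hvroot
  have hroot_ne : T.root ≠ v := by
    intro h
    rw [← h, T.root_parent] at huv
    exact Option.some_ne_none _ huv.symm
  have hreach : ∀ s, Relation.ReflTransGen qt s r := by
    intro s
    have h := T.reaches_root s
    induction h using Relation.ReflTransGen.head_induction_on with
    | refl =>
        by_cases hur : u = T.root
        · rw [← hur]; exact huroot
        · rw [hrdef, if_neg hur]
    | @head a c hac hcb ih =>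
        by_cases hau : a = u
        · subst hau; exact huroot
        by_cases hav : a = v
        · subst hav; exact hvroot
        by_cases hpav : T.parent a = some v
        · by_cases hc : ∃ x ∈ T.subtree a, G.Adj u x
          · exact Relation.ReflTransGen.head ((hQchild a hpav).trans (if_pos hc)) huroot
          · exact Relation.ReflTransGen.head ((hQchild a hpav).trans (if_neg hc)) hvroot
        · exact Relation.ReflTransGen.head ((hQother a hau hav hpav).trans hac) ih
  have hrootpar : Q r = none := by
    by_cases hur : u = T.root
    · have hrv : r = v := by rw [hrdef, if_pos hur]
      rw [hrv, hQv, hur]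
      exact T.root_parent
    · rw [hrdef, if_neg hur]
      rw [hQother T.root (Ne.symm hur) hroot_ne (by rw [T.root_parent]; exact fun h => Option.some_ne_none _ h.symm)]
      exact T.root_parent
  refine ⟨⟨Q, r, hrootpar, hreach, ?_⟩, huv, hQu, hQv, ?_, ?_, fun s h1 h2 _ h4 => hQother s h1 h2 h4⟩
  · intro x y hadj
    rcases T.hierarchy x y hadj with h | h
    · exact hkey x y hadj h
    · exact (hkey y x hadj.symm h).symm
  · intro w hwv hwu
    have hwu' : w ≠ u := by
      intro h; subst h; exact hcyc w (Relation.TransGen.single hwu)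
    have hpwv : T.parent w ≠ some v := by
      rw [hwu]; exact fun h => hneuv (Option.some.inj h)
    exact (hQother w hwu' hwv hpwv).trans hwu
  · intro w hw
    constructor
    · intro hc; exact (hQchild w hw).trans (if_pos hc)
    · intro hc; exact (hQchild w hw).trans (if_neg hc)
end
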